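/- Fix an integer n ≥ 1 and 0 < α₁ < 1, and define α_j = 1 − (1 − α₁)^j for j = 1, …, n. Then for every measurable set E ⊆ ℝⁿ, |{x ∈ ℝⁿ : M₁⋯M_n χ_E(x) > α_n}| ≤ (1 + 4(1−α₁)/α₁)^n · |E|. -/

import Mathlib

open MeasureTheory Set Filter
open scoped ENNReal

/-- The directional maximal operator `M_j` on `ℝⁿ`, averaging over segments
in the `j`-th coordinate direction. -/
noncomputable def dirMax {n : ℕ} (j : Fin n) (f : (Fin n → ℝ) → ℝ≥0∞)
    (x : Fin n → ℝ) : ℝ≥0∞ :=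
  ⨆ (s : ℝ) (t : ℝ) (_ : s < x j) (_ : x j < t),
    (∫⁻ u in Set.Ioo s t, f (Function.update x j u)) / ENNReal.ofReal (t - s)

/-- The iterated maximal operator `M₁ M₂ ⋯ M_n`. -/
noncomputable def iterMax (n : ℕ) (f : (Fin n → ℝ) → ℝ≥0∞) : (Fin n → ℝ) → ℝ≥0∞ :=
  (List.finRange n).foldr (fun j g => dirMax j g) f

/-!
In one dimension the set `{M χ_F > α}` is open and each of its points lies in an interval `I`
with `|I ∩ F| > α |I|`, hence `|I \ F| ≤ (1 - α) / α · |I ∩ F|`. A compact subset of it lying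
outside `F` is covered by finitely many such intervals, and a minimal subcover has multiplicity at
most two, so `|{M χ_F > α}| ≤ (1 + 2 (1 - α) / α) |F|`; by Tonelli the same holds for each `M_j`.
If `f ≤ 1` and the average of `f` over a segment exceeds `1 - (1 - α) λ`, then `f > 1 - λ` on more
than an `α`-fraction of it, so `{M_j f > 1 - (1 - α) λ} ⊆ {M_j χ_{f > 1 - λ} > α}`. Iterating with
`λ = (1 - α)^k` gives the bound with constant `(1 + 2 (1 - α) / α)^n`.
-/

open scoped Finset

theorem setLIntegral_le_measure {X : Type*} [MeasurableSpace X] {μ : Measure X} {g : X → ℝ≥0∞}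
    (hg : ∀ x, g x ≤ 1) (I : Set X) : ∫⁻ x in I, g x ∂μ ≤ μ I :=
  (lintegral_mono hg).trans (setLIntegral_one I).le

theorem setLIntegral_le_measure_inter_add {X : Type*} [MeasurableSpace X] {μ : Measure X}
    {g : X → ℝ≥0∞} (hg : ∀ x, g x ≤ 1) (I : Set X) {c : ℝ≥0∞}
    (hB : MeasurableSet {x | c < g x}) :
    ∫⁻ x in I, g x ∂μ ≤ μ (I ∩ {x | c < g x}) + c * μ (I \ {x | c < g x}) := by
  rw [← lintegral_inter_add_sdiff g I hB]
  gcongr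
  · exact setLIntegral_le_measure hg _
  · exact (setLIntegral_mono measurable_const fun x hx => not_lt.1 hx.2).trans
      (setLIntegral_const _ c).le

theorem ofReal_mul_lt_measure_inter_setOf_lt {X : Type*} [MeasurableSpace X] {μ : Measure X}
    {g : X → ℝ≥0∞} (hg : ∀ x, g x ≤ 1) {I : Set X} (hI : μ I ≠ ∞) {α l : ℝ} (hα : 0 ≤ α)
    (hl₀ : 0 < l) (hl₁ : l ≤ 1) (hB : MeasurableSet {x | ENNReal.ofReal (1 - l) < g x})
    (h : ENNReal.ofReal (1 - (1 - α) * l) * μ I < ∫⁻ x in I, g x ∂μ) :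
    ENNReal.ofReal α * μ I < μ (I ∩ {x | ENNReal.ofReal (1 - l) < g x}) := by
  set B := {x | ENNReal.ofReal (1 - l) < g x}
  have h' := h.trans_le (setLIntegral_le_measure_inter_add hg I hB)
  have hIB : μ (I ∩ B) ≠ ∞ := measure_ne_top_of_subset inter_subset_left hI
  have hIdB : μ (I \ B) ≠ ∞ := measure_ne_top_of_subset sdiff_subset hI
  rw [← measure_inter_add_sdiff I hB] at h' ⊢
  rw [← ENNReal.ofReal_toReal hIB, ← ENNReal.ofReal_toReal hIdB] at h' ⊢
  set a := (μ (I ∩ B)).toReal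
  set b := (μ (I \ B)).toReal
  have ha : 0 ≤ a := ENNReal.toReal_nonneg
  have hb : 0 ≤ b := ENNReal.toReal_nonneg
  have hl : 0 ≤ 1 - (1 - α) * l := by nlinarith
  rw [← ENNReal.ofReal_add ha hb, ← ENNReal.ofReal_mul hl,
    ← ENNReal.ofReal_mul (by linarith), ← ENNReal.ofReal_add ha (by nlinarith),
    ENNReal.ofReal_lt_ofReal_iff'] at h'
  rw [← ENNReal.ofReal_add ha hb, ← ENNReal.ofReal_mul hα, ENNReal.ofReal_lt_ofReal_iff']
  have hneg : l * (α * (a + b) - a) < 0 := by linarith [h'.1]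
  have hlt : α * (a + b) < a := by nlinarith
  exact ⟨hlt, by nlinarith [mul_nonneg hα (add_nonneg ha hb)]⟩

theorem measure_sdiff_le_of_ofReal_mul_le {X : Type*} [MeasurableSpace X] {μ : Measure X}
    {I F : Set X} (hI : μ I ≠ ∞) (hF : MeasurableSet F) {α : ℝ} (hα : 0 < α)
    (h : ENNReal.ofReal α * μ I ≤ μ (I ∩ F)) :
    μ (I \ F) ≤ ENNReal.ofReal ((1 - α) / α) * μ (I ∩ F) := by
  have hIF : μ (I ∩ F) ≠ ∞ := measure_ne_top_of_subset inter_subset_left hI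
  have hIdF : μ (I \ F) ≠ ∞ := measure_ne_top_of_subset sdiff_subset hI
  rw [← measure_inter_add_sdiff I hF] at h
  rw [← ENNReal.ofReal_toReal hIF, ← ENNReal.ofReal_toReal hIdF] at h ⊢
  set a := (μ (I ∩ F)).toReal
  set b := (μ (I \ F)).toReal
  have ha : 0 ≤ a := ENNReal.toReal_nonneg
  have hb : 0 ≤ b := ENNReal.toReal_nonneg
  rw [← ENNReal.ofReal_add ha hb, ← ENNReal.ofReal_mul hα.le, ENNReal.ofReal_le_ofReal_iff ha] at h
  rw [← ENNReal.ofReal_mul' ha]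
  refine ENNReal.ofReal_le_ofReal ?_
  rw [div_mul_eq_mul_div, le_div_iff₀ hα]
  linarith

theorem sum_measure_inter_le_of_card_le {X ι : Type*} [MeasurableSpace X] (μ : Measure X)
    {t : Finset ι} {A : ι → Set X} [∀ x, DecidablePred fun i => x ∈ A i]
    (hA : ∀ i ∈ t, MeasurableSet (A i)) {k : ℕ} (hk : ∀ x, #{i ∈ t | x ∈ A i} ≤ k)
    (F : Set X) :
    ∑ i ∈ t, μ (A i ∩ F) ≤ k * μ F := by
  calc ∑ i ∈ t, μ (A i ∩ F) = ∫⁻ x in F, ∑ i ∈ t, (A i).indicator 1 x ∂μ := by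
        rw [lintegral_finsetSum _ fun i hi => measurable_one.indicator (hA i hi)]
        exact Finset.sum_congr rfl fun i hi => by
          rw [lintegral_indicator_one (hA i hi), Measure.restrict_apply (hA i hi)]
    _ ≤ ∫⁻ _ in F, (k : ℝ≥0∞) ∂μ := lintegral_mono fun x => by
        simp only [indicator_apply, Pi.one_apply, Finset.sum_boole]
        exact_mod_cast hk x
    _ = k * μ F := setLIntegral_const F _

theorem measure_pi_le_of_slice_le {ι : Type*} [Fintype ι] [DecidableEq ι] {X : ι → Type*}
    [∀ i, MeasurableSpace (X i)] {μ : ∀ i, Measure (X i)} [∀ i, SigmaFinite (μ i)] (j : ι)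
    {S A : Set (∀ i, X i)} (hS : MeasurableSet S) (hA : MeasurableSet A) (c : ℝ≥0∞)
    (h : ∀ x, μ j (Function.update x j ⁻¹' S) ≤ c * μ j (Function.update x j ⁻¹' A)) :
    Measure.pi μ S ≤ c * Measure.pi μ A := by
  have hslice : ∀ {T : Set (∀ i, X i)}, MeasurableSet T → ∀ x,
      ∫⁻ u, T.indicator 1 (Function.update x j u) ∂μ j = μ j (Function.update x j ⁻¹' T) :=
    fun hT x => by
      simp_rw [← indicator_comp_right (Function.update x j) (g := 1)]
      exact lintegral_indicator_one (measurable_update x hT)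
  rw [← lintegral_indicator_one hS, ← lintegral_indicator_one hA,
    ← lintegral_const_mul c (measurable_one.indicator hA)]
  refine lintegral_le_of_lmarginal_le {j} (measurable_one.indicator hS)
    ((measurable_one.indicator hA).const_mul c) fun x => ?_
  simp only [lmarginal_singleton]
  have hA' : Measurable fun u => A.indicator (1 : (∀ i, X i) → ℝ≥0∞) (Function.update x j u) :=
    (measurable_one.indicator hA).comp (measurable_update x)
  rw [hslice hS, lintegral_const_mul c hA', hslice hA]
  exact h x

theorem Ioo_subset_union_Ioo_of_mem {x a₁ b₁ a₂ b₂ a₃ b₃ : ℝ} (h₁ : x ∈ Ioo a₁ b₁)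
    (h₃ : x ∈ Ioo a₃ b₃) (ha : a₁ ≤ a₂) (hb : b₂ ≤ b₃) :
    Ioo a₂ b₂ ⊆ Ioo a₁ b₁ ∪ Ioo a₃ b₃ := by
  intro y hy
  rcases le_or_gt y x with hyx | hxy
  · exact Or.inl ⟨ha.trans_lt hy.1, hyx.trans_lt h₁.2⟩
  · exact Or.inr ⟨h₃.1.trans hxy, hy.2.trans_le hb⟩

/-- Of three intervals through a common point, the one that neither starts first nor ends last
is covered by the other two. -/
theorem exists_Ioo_subset_biUnion_erase {t : Finset (ℝ × ℝ)} {x : ℝ}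
    (hx : 2 < #{p ∈ t | x ∈ Ioo p.1 p.2}) :
    ∃ r ∈ t, Ioo r.1 r.2 ⊆ ⋃ p ∈ t.erase r, Ioo p.1 p.2 := by
  set T := {p ∈ t | x ∈ Ioo p.1 p.2}
  have hT : T.Nonempty := Finset.card_pos.1 (by omega)
  obtain ⟨p, hpT, hp⟩ := T.exists_min_image Prod.fst hT
  obtain ⟨q, hqT, hq⟩ := T.exists_max_image Prod.snd hT
  obtain ⟨r, hrT, hrpq⟩ :=
    Finset.exists_mem_notMem_of_card_lt_card (Finset.card_le_two.trans_lt hx)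
  simp only [Finset.mem_insert, Finset.mem_singleton, not_or] at hrpq
  have hsub := Ioo_subset_union_Ioo_of_mem (Finset.mem_filter.1 hpT).2
    (Finset.mem_filter.1 hqT).2 (hp r hrT) (hq r hrT)
  rw [Finset.mem_filter] at hpT hqT hrT
  refine ⟨r, hrT.1, hsub.trans (union_subset ?_ ?_)⟩
  · exact Finset.subset_set_biUnion_of_mem (f := fun p : ℝ × ℝ => Ioo p.1 p.2)
      (Finset.mem_erase.2 ⟨Ne.symm hrpq.1, hpT.1⟩)
  · exact Finset.subset_set_biUnion_of_mem (f := fun p : ℝ × ℝ => Ioo p.1 p.2)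
      (Finset.mem_erase.2 ⟨Ne.symm hrpq.2, hqT.1⟩)

theorem exists_subcover_card_mem_Ioo_le_two (s : Finset (ℝ × ℝ)) {K : Set ℝ}
    (hK : K ⊆ ⋃ p ∈ s, Ioo p.1 p.2) :
    ∃ t ⊆ s, K ⊆ ⋃ p ∈ t, Ioo p.1 p.2 ∧ ∀ x, #{p ∈ t | x ∈ Ioo p.1 p.2} ≤ 2 := by
  classical
  obtain ⟨t, ht, hmin⟩ := (s.powerset.filter fun t => K ⊆ ⋃ p ∈ t, Ioo p.1 p.2).exists_min_image
    Finset.card ⟨s, Finset.mem_filter.2 ⟨Finset.mem_powerset_self s, hK⟩⟩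
  rw [Finset.mem_filter, Finset.mem_powerset] at ht
  refine ⟨t, ht.1, ht.2, fun x => not_lt.1 fun hx => ?_⟩
  obtain ⟨r, hr, hsub⟩ := exists_Ioo_subset_biUnion_erase hx
  have hcover : K ⊆ ⋃ p ∈ t.erase r, Ioo p.1 p.2 := by
    refine ht.2.trans (iUnion₂_subset fun p hp => ?_)
    by_cases hpr : p = r
    · exact hpr ▸ hsub
    · exact Finset.subset_set_biUnion_of_mem (f := fun p : ℝ × ℝ => Ioo p.1 p.2)
        (Finset.mem_erase.2 ⟨hpr, hp⟩)
  exact (Finset.card_erase_lt_of_mem hr).not_ge (hmin _ (Finset.mem_filter.2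
    ⟨Finset.mem_powerset.2 ((Finset.erase_subset r t).trans ht.1), hcover⟩))

theorem setLIntegral_Ioo_le_add {g : ℝ → ℝ≥0∞} (hg : ∀ u, g u ≤ 1) {s q r t : ℝ} (hsq : s ≤ q)
    (hrt : r ≤ t) :
    ∫⁻ u in Ioo s t, g u ≤ (∫⁻ u in Ioo q r, g u) + ENNReal.ofReal (q - s + (t - r)) := by
  have hsub : Ioo s t ⊆ Ioo q r ∪ (Ioc s q ∪ Ico r t) := fun u hu => by
    rcases le_or_gt u q with huq | hqu
    · exact Or.inr (Or.inl ⟨hu.1, huq⟩)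
    rcases lt_or_ge u r with hur | hru
    · exact Or.inl ⟨hqu, hur⟩
    · exact Or.inr (Or.inr ⟨hru, hu.2⟩)
  calc ∫⁻ u in Ioo s t, g u ≤ ∫⁻ u in Ioo q r ∪ (Ioc s q ∪ Ico r t), g u := lintegral_mono_set hsub
    _ ≤ (∫⁻ u in Ioo q r, g u) + ((∫⁻ u in Ioc s q, g u) + ∫⁻ u in Ico r t, g u) :=
        (lintegral_union_le _ _ _).trans (add_le_add le_rfl (lintegral_union_le _ _ _))
    _ ≤ (∫⁻ u in Ioo q r, g u) + (volume (Ioc s q) + volume (Ico r t)) :=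
        add_le_add le_rfl (add_le_add (setLIntegral_le_measure hg _) (setLIntegral_le_measure hg _))
    _ = (∫⁻ u in Ioo q r, g u) + ENNReal.ofReal (q - s + (t - r)) := by
        rw [Real.volume_Ioc, Real.volume_Ico,
          ← ENNReal.ofReal_add (sub_nonneg.2 hsq) (sub_nonneg.2 hrt)]

theorem volume_sdiff_le_of_isCompact {F K : Set ℝ} (hK : IsCompact K)
    {c : ℝ≥0∞} (hcov : ∀ x ∈ K, ∃ s t, x ∈ Ioo s t ∧
      volume (Ioo s t \ F) ≤ c * volume (Ioo s t ∩ F)) :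
    volume (K \ F) ≤ 2 * c * volume F := by
  set G := {p : ℝ × ℝ | volume (Ioo p.1 p.2 \ F) ≤ c * volume (Ioo p.1 p.2 ∩ F)}
  have hKG : K ⊆ ⋃ p ∈ G, Ioo p.1 p.2 := fun x hx => by
    obtain ⟨s, t, hxst, hst⟩ := hcov x hx
    exact mem_biUnion (x := (s, t)) hst hxst
  obtain ⟨G', hG'G, hG', hKG'⟩ := hK.elim_finite_subcover_image (fun _ _ => isOpen_Ioo) hKG
  obtain ⟨u, hu, hKu, hmult⟩ :=
    exists_subcover_card_mem_Ioo_le_two hG'.toFinset (by simpa using hKG')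
  calc volume (K \ F) ≤ volume (⋃ p ∈ u, Ioo p.1 p.2 \ F) := measure_mono fun x hx => by
        obtain ⟨p, hp, hxp⟩ := mem_iUnion₂.1 (hKu hx.1)
        exact mem_biUnion hp ⟨hxp, hx.2⟩
    _ ≤ ∑ p ∈ u, volume (Ioo p.1 p.2 \ F) := measure_biUnion_finset_le u _
    _ ≤ ∑ p ∈ u, c * volume (Ioo p.1 p.2 ∩ F) :=
        Finset.sum_le_sum fun p hp => hG'G (hG'.mem_toFinset.1 (hu hp))
    _ = c * ∑ p ∈ u, volume (Ioo p.1 p.2 ∩ F) := (Finset.mul_sum _ _ _).symm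
    _ ≤ c * (2 * volume F) := by
        gcongr
        exact_mod_cast sum_measure_inter_le_of_card_le volume (fun _ _ => measurableSet_Ioo)
          hmult F
    _ = 2 * c * volume F := by ring

-- `maxDensity F` is the one-dimensional maximal function `M χ_F`.
noncomputable def maxDensity (F : Set ℝ) (x : ℝ) : ℝ≥0∞ :=
  ⨆ (s : ℝ) (t : ℝ) (_ : s < x) (_ : x < t), volume (Ioo s t ∩ F) / ENNReal.ofReal (t - s)

theorem le_maxDensity {F : Set ℝ} {x s t : ℝ} (hx : x ∈ Ioo s t) :
    volume (Ioo s t ∩ F) / ENNReal.ofReal (t - s) ≤ maxDensity F x :=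
  le_iSup₂_of_le s t (le_iSup₂_of_le (α := ℝ≥0∞) hx.1 hx.2 le_rfl)

theorem exists_mul_lt_of_lt_maxDensity {F : Set ℝ} {x : ℝ} {c : ℝ≥0∞} (h : c < maxDensity F x) :
    ∃ s t, x ∈ Ioo s t ∧ c * ENNReal.ofReal (t - s) < volume (Ioo s t ∩ F) := by
  simp only [maxDensity, lt_iSup_iff] at h
  obtain ⟨s, t, hs, ht, h⟩ := h
  exact ⟨s, t, ⟨hs, ht⟩, ENNReal.mul_lt_of_lt_div h⟩

theorem isOpen_setOf_lt_maxDensity (F : Set ℝ) (c : ℝ≥0∞) : IsOpen {x | c < maxDensity F x} := by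
  refine isOpen_iff_forall_mem_open.2 fun x hx => ?_
  obtain ⟨s, t, hx, h⟩ := exists_mul_lt_of_lt_maxDensity hx
  refine ⟨Ioo s t, fun y hy => ?_, isOpen_Ioo, hx⟩
  have hst : 0 < t - s := sub_pos.2 (hx.1.trans hx.2)
  exact ((ENNReal.lt_div_iff_mul_lt (Or.inl (ENNReal.ofReal_pos.2 hst).ne')
    (Or.inl ENNReal.ofReal_ne_top)).2 h).trans_le (le_maxDensity hy)

theorem volume_setOf_lt_maxDensity_le {F : Set ℝ} (hF : MeasurableSet F) {α : ℝ} (hα : 0 < α) :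
    volume {x | ENNReal.ofReal α < maxDensity F x}
      ≤ (1 + 2 * ENNReal.ofReal ((1 - α) / α)) * volume F := by
  set U := {x | ENNReal.ofReal α < maxDensity F x}
  have hUF : volume (U \ F) ≤ 2 * ENNReal.ofReal ((1 - α) / α) * volume F := by
    rw [((isOpen_setOf_lt_maxDensity F _).measurableSet.diff hF).measure_eq_iSup_isCompact]
    refine iSup₂_le fun K hKU => iSup_le fun hK => ?_
    rw [← sdiff_eq_left.2 (disjoint_sdiff_left.mono_left hKU)]
    refine volume_sdiff_le_of_isCompact hK fun x hx => ?_
    obtain ⟨s, t, hxst, h⟩ := exists_mul_lt_of_lt_maxDensity (hKU hx).1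
    refine ⟨s, t, hxst, measure_sdiff_le_of_ofReal_mul_le ?_ hF hα ?_⟩
    · simp [Real.volume_Ioo]
    · simpa [Real.volume_Ioo] using h.le
  calc volume U ≤ volume (U ∩ F) + volume (U \ F) := measure_le_inter_add_sdiff _ _ _
    _ ≤ volume F + 2 * ENNReal.ofReal ((1 - α) / α) * volume F :=
        add_le_add (measure_mono inter_subset_right) hUF
    _ = (1 + 2 * ENNReal.ofReal ((1 - α) / α)) * volume F := by ring

section DirectionalMaximal

variable {n : ℕ} {j : Fin n} {f : (Fin n → ℝ) → ℝ≥0∞}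

noncomputable def segmentAverage (j : Fin n) (f : (Fin n → ℝ) → ℝ≥0∞) (s t : ℝ)
    (x : Fin n → ℝ) : ℝ≥0∞ :=
  (∫⁻ u in Ioo s t, f (Function.update x j u)) / ENNReal.ofReal (t - s)

theorem segmentAverage_le_dirMax {x : Fin n → ℝ} {s t : ℝ} (hx : x j ∈ Ioo s t) :
    segmentAverage j f s t x ≤ dirMax j f x :=
  le_iSup₂_of_le s t (le_iSup₂_of_le (α := ℝ≥0∞) hx.1 hx.2 le_rfl)

theorem exists_lt_segmentAverage_of_lt_dirMax {x : Fin n → ℝ} {c : ℝ≥0∞}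
    (h : c < dirMax j f x) : ∃ s t, x j ∈ Ioo s t ∧ c < segmentAverage j f s t x := by
  simp only [dirMax, lt_iSup_iff] at h
  obtain ⟨s, t, hs, ht, h⟩ := h
  exact ⟨s, t, ⟨hs, ht⟩, h⟩

theorem dirMax_le_one (j : Fin n) (hf : ∀ y, f y ≤ 1) (x : Fin n → ℝ) : dirMax j f x ≤ 1 :=
  iSup₂_le fun s t => iSup₂_le fun _ _ => ENNReal.div_le_of_le_mul <| by
    rw [one_mul, ← Real.volume_Ioo]
    exact setLIntegral_le_measure (fun u => hf _) _

theorem exists_rat_segmentAverage_le_add (hf : ∀ y, f y ≤ 1) {x : Fin n → ℝ} {s t : ℝ}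
    (hx : x j ∈ Ioo s t) {ε : NNReal} (hε : 0 < ε) :
    ∃ q r : ℚ, x j ∈ Ioo (q : ℝ) r ∧ segmentAverage j f s t x ≤ segmentAverage j f q r x + ε := by
  have hst : 0 < t - s := sub_pos.2 (hx.1.trans hx.2)
  have hδ : 0 < ε * (t - s) / 2 := by positivity
  obtain ⟨q, hsq, hq⟩ := exists_rat_btwn (lt_min (lt_add_of_pos_right s hδ) hx.1)
  obtain ⟨r, hr, hrt⟩ := exists_rat_btwn (max_lt (sub_lt_self t hδ) hx.2)
  have hqx := hq.trans_le (min_le_right _ _)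
  have hxr := (le_max_right _ _).trans_lt hr
  have herr : q - s + (t - r) ≤ ε * (t - s) := by
    linarith [hq.trans_le (min_le_left _ _), (le_max_left _ _).trans_lt hr]
  refine ⟨q, r, ⟨hqx, hxr⟩, ?_⟩
  calc segmentAverage j f s t x
      ≤ ((∫⁻ u in Ioo (q : ℝ) r, f (Function.update x j u)) + ENNReal.ofReal (q - s + (t - r)))
          / ENNReal.ofReal (t - s) :=
        ENNReal.div_le_div_right (setLIntegral_Ioo_le_add (fun u => hf _) hsq.le hrt.le) _
    _ = (∫⁻ u in Ioo (q : ℝ) r, f (Function.update x j u)) / ENNReal.ofReal (t - s)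
          + ENNReal.ofReal (q - s + (t - r)) / ENNReal.ofReal (t - s) := ENNReal.add_div
    _ ≤ segmentAverage j f q r x + ε := by
        refine add_le_add (ENNReal.div_le_div_left (ENNReal.ofReal_le_ofReal (by linarith)) _)
          (ENNReal.div_le_of_le_mul ?_)
        rw [← ENNReal.ofReal_coe_nnreal, ← ENNReal.ofReal_mul ε.coe_nonneg]
        exact ENNReal.ofReal_le_ofReal herr

theorem dirMax_eq_iSup_rat (hf : ∀ y, f y ≤ 1) (x : Fin n → ℝ) :
    dirMax j f x = ⨆ (q : ℚ) (r : ℚ),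
      {y : Fin n → ℝ | y j ∈ Ioo (q : ℝ) r}.indicator (segmentAverage j f q r) x := by
  simp only [indicator_apply, mem_ofPred_eq]
  refine le_antisymm (iSup₂_le fun s t => iSup₂_le fun hs ht => ?_) (iSup₂_le fun q r => ?_)
  · refine ENNReal.le_of_forall_pos_le_add fun ε hε _ => ?_
    obtain ⟨q, r, hx, h⟩ := exists_rat_segmentAverage_le_add hf ⟨hs, ht⟩ hε
    exact h.trans (add_le_add (le_iSup₂_of_le q r (if_pos hx).ge) le_rfl)
  · split_ifs with hx
    exacts [segmentAverage_le_dirMax hx, zero_le]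

theorem measurable_segmentAverage (j : Fin n) (hf : Measurable f) (s t : ℝ) :
    Measurable (segmentAverage j f s t) :=
  (hf.comp measurable_update').lintegral_prod_right'.div_const _

theorem measurable_dirMax (j : Fin n) (hf : Measurable f) (hf1 : ∀ y, f y ≤ 1) :
    Measurable (dirMax j f) := by
  rw [funext (dirMax_eq_iSup_rat hf1)]
  exact Measurable.iSup fun q => Measurable.iSup fun r =>
    (measurable_segmentAverage j hf q r).indicator
      (measurableSet_Ioo.preimage (measurable_pi_apply j))

theorem dirMax_indicator_one (j : Fin n) {A : Set (Fin n → ℝ)} (hA : MeasurableSet A)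
    (x : Fin n → ℝ) :
    dirMax j (A.indicator 1) x = maxDensity (Function.update x j ⁻¹' A) (x j) := by
  refine iSup_congr fun s => iSup_congr fun t => iSup_congr fun _ => iSup_congr fun _ => ?_
  congr 1
  simp_rw [← indicator_comp_right (Function.update x j) (g := 1), inter_comm (Ioo s t)]
  exact (lintegral_indicator_one (measurable_update x hA)).trans
    (Measure.restrict_apply' measurableSet_Ioo)

theorem lt_dirMax_indicator_one_of_lt_dirMax (hf : ∀ y, f y ≤ 1) {α l : ℝ} (hα : 0 ≤ α)
    (hl₀ : 0 < l) (hl₁ : l ≤ 1) (hA : MeasurableSet {y | ENNReal.ofReal (1 - l) < f y})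
    {x : Fin n → ℝ} (hx : ENNReal.ofReal (1 - (1 - α) * l) < dirMax j f x) :
    ENNReal.ofReal α < dirMax j ({y | ENNReal.ofReal (1 - l) < f y}.indicator 1) x := by
  obtain ⟨s, t, hxst, h⟩ := exists_lt_segmentAverage_of_lt_dirMax hx
  have hst : 0 < t - s := sub_pos.2 (hxst.1.trans hxst.2)
  rw [dirMax_indicator_one j hA]
  refine lt_of_lt_of_le ?_ (le_maxDensity hxst)
  rw [ENNReal.lt_div_iff_mul_lt (Or.inl (ENNReal.ofReal_pos.2 hst).ne')
    (Or.inl ENNReal.ofReal_ne_top), ← Real.volume_Ioo]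
  refine ofReal_mul_lt_measure_inter_setOf_lt (fun u => hf _) (by simp [Real.volume_Ioo]) hα hl₀
    hl₁ (measurable_update x hA) ?_
  rw [Real.volume_Ioo]
  exact ENNReal.mul_lt_of_lt_div h

theorem volume_setOf_lt_dirMax_indicator_one_le (j : Fin n) {A : Set (Fin n → ℝ)}
    (hA : MeasurableSet A) {α : ℝ} (hα : 0 < α) :
    volume {x | ENNReal.ofReal α < dirMax j (A.indicator 1) x}
      ≤ (1 + 2 * ENNReal.ofReal ((1 - α) / α)) * volume A := by
  have hS : MeasurableSet {x | ENNReal.ofReal α < dirMax j (A.indicator 1) x} :=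
    measurableSet_lt measurable_const
      (measurable_dirMax j (measurable_one.indicator hA) (indicator_le_self A 1))
  refine measure_pi_le_of_slice_le j hS hA _ fun x => ?_
  have hslice : Function.update x j ⁻¹' {y | ENNReal.ofReal α < dirMax j (A.indicator 1) y}
      = {u | ENNReal.ofReal α < maxDensity (Function.update x j ⁻¹' A) u} := by
    ext u
    have hidem : Function.update (Function.update x j u) j = Function.update x j :=
      funext fun w => Function.update_idem _ _ _
    simp [dirMax_indicator_one j hA, hidem]
  rw [hslice]
  exact volume_setOf_lt_maxDensity_le (measurable_update x hA) hα

theorem volume_setOf_lt_dirMax_le (j : Fin n) (hf : Measurable f) (hf1 : ∀ y, f y ≤ 1)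
    {α l : ℝ} (hα : 0 < α) (hl₀ : 0 < l) (hl₁ : l ≤ 1) :
    volume {x | ENNReal.ofReal (1 - (1 - α) * l) < dirMax j f x}
      ≤ (1 + 2 * ENNReal.ofReal ((1 - α) / α)) * volume {x | ENNReal.ofReal (1 - l) < f x} := by
  have hA : MeasurableSet {x | ENNReal.ofReal (1 - l) < f x} :=
    measurableSet_lt measurable_const hf
  refine (measure_mono fun x hx => ?_).trans (volume_setOf_lt_dirMax_indicator_one_le j hA hα)
  exact lt_dirMax_indicator_one_of_lt_dirMax hf1 hα.le hl₀ hl₁ hA hx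

theorem foldr_dirMax_le_one (l : List (Fin n)) (hf : ∀ y, f y ≤ 1) (y : Fin n → ℝ) :
    l.foldr (fun j g => dirMax j g) f y ≤ 1 := by
  induction l generalizing y with
  | nil => exact hf y
  | cons j l ih => exact dirMax_le_one j ih y

theorem measurable_foldr_dirMax (l : List (Fin n)) (hf : Measurable f) (hf1 : ∀ y, f y ≤ 1) :
    Measurable (l.foldr (fun j g => dirMax j g) f) := by
  induction l with
  | nil => exact hf
  | cons j l ih => exact measurable_dirMax j ih (foldr_dirMax_le_one l hf1)

theorem volume_setOf_lt_foldr_dirMax_le (l : List (Fin n)) (hf : Measurable f)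
    (hf1 : ∀ y, f y ≤ 1) {α : ℝ} (hα : 0 < α) (hα₁ : α < 1) :
    volume {x | ENNReal.ofReal (1 - (1 - α) ^ l.length) < l.foldr (fun j g => dirMax j g) f x}
      ≤ (1 + 2 * ENNReal.ofReal ((1 - α) / α)) ^ l.length * volume {x | 0 < f x} := by
  induction l with
  | nil => simp
  | cons j l ih =>
    have hl₀ : 0 < (1 - α) ^ l.length := pow_pos (by linarith) _
    have hl₁ : (1 - α) ^ l.length ≤ 1 := pow_le_one₀ (by linarith) (by linarith)
    rw [List.length_cons, pow_succ' (1 - α), pow_succ', mul_assoc]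
    refine (volume_setOf_lt_dirMax_le j (measurable_foldr_dirMax l hf hf1)
      (foldr_dirMax_le_one l hf1) hα hl₀ hl₁).trans ?_
    gcongr

end DirectionalMaximal

theorem iterated_solyanik_geometric (n : ℕ)
    (α₁ : ℝ) (hα₁ : 0 < α₁) (hα₁' : α₁ < 1)
    (E : Set (Fin n → ℝ)) (hE : MeasurableSet E) :
    volume {x : Fin n → ℝ |
        iterMax n (E.indicator 1) x > ENNReal.ofReal (1 - (1 - α₁) ^ n)}
      ≤ ENNReal.ofReal ((1 + 4 * (1 - α₁) / α₁) ^ n) * volume E := by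
  have hpos : {x | 0 < E.indicator (1 : (Fin n → ℝ) → ℝ≥0∞) x} = E := by
    ext x
    by_cases hx : x ∈ E <;> simp [hx]
  have key := volume_setOf_lt_foldr_dirMax_le (List.finRange n) (measurable_one.indicator hE)
    (indicator_le_self E 1) hα₁ hα₁'
  rw [List.length_finRange, hpos] at key
  have hc : 1 + 2 * ENNReal.ofReal ((1 - α₁) / α₁) ≤ ENNReal.ofReal (1 + 4 * (1 - α₁) / α₁) := by
    have : 0 ≤ (1 - α₁) / α₁ := div_nonneg (by linarith) hα₁.le
    rw [ENNReal.ofReal_add zero_le_one (by positivity), ENNReal.ofReal_one, mul_div_assoc,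
      ENNReal.ofReal_mul (by norm_num)]
    gcongr
    norm_num
  rw [ENNReal.ofReal_pow (by positivity)]
  exact key.trans (by gcongr)
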